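/- arXiv:1212.3378 — 2 statements merged into one kernel-verified Lean document; each statement's English description precedes it below -/
import Mathlib

section
/- Let G be a group with unitary representations U_a on H_a and U_s on H_s, let ρ_a be a state on H_a, and let {Π_k} be a projective measurement on H_s. The following are equivalent: (i) there exists a projective measurement {Π̃_k} on H_s⊗H_a with every Π̃_k commuting with U_s(g)⊗U_a(g) for all g ∈ G, such that Tr(Π̃_k(ρ_s⊗ρ_a)) = Tr(Π_k ρ_s) for all states ρ_s and all k; (ii) there exists a projective measurement {Q_k} on H_s⊗H_a such that for all g ∈ G, all states ρ_s, and all k, Tr(Q_k(ρ_s ⊗ U_a(g)ρ_a U_a(g)†)) = Tr(U_s(g)Π_k U_s(g)† ρ_s). -/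
/-!
(ii) ⇒ (i): twirling `Q` over the group, `E k = |G|⁻¹ ∑_g u(g)ᴴ (Q k) u(g)` with `u = Us ⊗ Ua`,
gives a covariant POVM, and every term of the average simulates `P k`: it is the programming
condition for `g`, applied to the rotated state `Us g ρs (Us g)ᴴ`.

(i) ⇒ (ii): testing the simulation on the state `P k / tr (P k)` forces `E k` to fix `P k ⊗ ρa`,
and by covariance also `u(g) (P k ⊗ ρa)` for every `g`. The eigenvalue-`1` eigenprojections of the
effects `E k` are mutually orthogonal; completing them to a projective measurement `Q` gives
`Q k u(g) (P l ⊗ ρa) = δ_kl u(g) (P l ⊗ ρa)`. Summing over `l` (as `∑ P l = 1`) yields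
`Q k (ρs ⊗ Ua g ρa (Ua g)ᴴ) = (Us g (P k) (Us g)ᴴ ρs) ⊗ Ua g ρa (Ua g)ᴴ`, whose trace is the
programming condition.
-/

open Matrix
open scoped ComplexOrder Kronecker

section ProjectiveMeasurement

variable {R ι : Type*} [Ring R] [StarRing R] [Fintype ι]

structure IsProjectiveMeasurement (Q : ι → R) : Prop where
  isStarProjection : ∀ k, IsStarProjection (Q k)
  mul_eq_zero : ∀ k l, k ≠ l → Q k * Q l = 0
  sum_eq_one : ∑ k, Q k = 1

namespace IsProjectiveMeasurement

variable {Q : ι → R} (hQ : IsProjectiveMeasurement Q)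
include hQ

theorem mul_eq_zero_of_mul_eq_self {x : R} {k l : ι} (hk : Q k * x = x) (hlk : l ≠ k) :
    Q l * x = 0 := by
  rw [← hk, ← mul_assoc, hQ.mul_eq_zero l k hlk, zero_mul]

theorem mul_sum_eq_of_mul_eq_self {x : ι → R} (hx : ∀ l, Q l * x l = x l) (k : ι) :
    Q k * ∑ l, x l = x k := by
  rw [Finset.mul_sum, Finset.sum_eq_single k
    (fun l _ hlk => hQ.mul_eq_zero_of_mul_eq_self (hx l) hlk.symm) (by simp), hx k]

end IsProjectiveMeasurement

theorem exists_isProjectiveMeasurement_mul_eq_of_orthogonal [Nonempty ι] {F : ι → R}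
    (hF : ∀ k, IsStarProjection (F k)) (horth : ∀ k l, k ≠ l → F k * F l = 0) :
    ∃ Q : ι → R, IsProjectiveMeasurement Q ∧ ∀ k, Q k * F k = F k := by
  classical
  obtain ⟨k₀⟩ := ‹Nonempty ι›
  set S := ∑ k, F k
  have hFS (k) : F k * S = F k := by
    rw [Finset.mul_sum, Finset.sum_eq_single k (fun l _ hlk => horth k l hlk.symm) (by simp),
      (hF k).isIdempotentElem.eq]
  have hSF (k) : S * F k = F k := by
    rw [Finset.sum_mul, Finset.sum_eq_single k (fun l _ hlk => horth l k hlk) (by simp),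
      (hF k).isIdempotentElem.eq]
  have hS : IsStarProjection S :=
    ⟨by rw [IsIdempotentElem, Finset.mul_sum]; exact Finset.sum_congr rfl fun k _ => hSF k,
      isSelfAdjoint_sum _ fun k _ => (hF k).isSelfAdjoint⟩
  have hFR (k) : F k * (1 - S) = 0 := by rw [mul_sub, mul_one, hFS, sub_self]
  have hRF (k) : (1 - S) * F k = 0 := by rw [sub_mul, one_mul, hSF, sub_self]
  refine ⟨F + Pi.single k₀ (1 - S), ⟨fun k => ?_, fun k l hkl => ?_, ?_⟩, fun k => ?_⟩
  · rcases eq_or_ne k k₀ with rfl | hk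
    · simpa using (hF k).add hS.one_sub (hFR k)
    · simpa [hk] using hF k
  · by_cases hk : k = k₀ <;> by_cases hl : l = k₀
    · exact absurd (hk.trans hl.symm) hkl
    · simp [hk, hl, add_mul, horth k₀ l (hk ▸ hkl), hRF]
    · simp [hk, hl, mul_add, horth k k₀ (hl ▸ hkl), hFR]
    · simp [hk, hl, horth k l hkl]
  · simp [Finset.sum_add_distrib, S]
  · rcases eq_or_ne k k₀ with rfl | hk
    · simp [add_mul, (hF k).isIdempotentElem.eq, hRF]
    · simp [hk, (hF k).isIdempotentElem.eq]

end ProjectiveMeasurement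

namespace Matrix

section

variable {𝕜 n : Type*} [RCLike 𝕜] [Fintype n]

theorem trace_conjTranspose_mul_self_mul_conjTranspose_mul_self {m : Type*} [Fintype m]
    (X Y : Matrix m n 𝕜) : (Xᴴ * X * (Yᴴ * Y)).trace = ((Y * Xᴴ)ᴴ * (Y * Xᴴ)).trace := by
  rw [conjTranspose_mul, conjTranspose_conjTranspose, Matrix.mul_assoc, trace_mul_comm]
  simp only [Matrix.mul_assoc]

open scoped MatrixOrder in
theorem PosSemidef.trace_mul_nonneg {A B : Matrix n n 𝕜} (hA : A.PosSemidef)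
    (hB : B.PosSemidef) : 0 ≤ (A * B).trace := by
  classical
  obtain ⟨X, rfl⟩ := CStarAlgebra.nonneg_iff_eq_star_mul_self.mp hA.nonneg
  obtain ⟨Y, rfl⟩ := CStarAlgebra.nonneg_iff_eq_star_mul_self.mp hB.nonneg
  rw [star_eq_conjTranspose, star_eq_conjTranspose,
    trace_conjTranspose_mul_self_mul_conjTranspose_mul_self]
  exact (posSemidef_conjTranspose_mul_self _).trace_nonneg

open scoped MatrixOrder in
theorem PosSemidef.mul_eq_zero_of_trace_mul_eq_zero {A B : Matrix n n 𝕜} (hA : A.PosSemidef)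
    (hB : B.PosSemidef) (h : (A * B).trace = 0) : A * B = 0 := by
  classical
  obtain ⟨X, rfl⟩ := CStarAlgebra.nonneg_iff_eq_star_mul_self.mp hA.nonneg
  obtain ⟨Y, rfl⟩ := CStarAlgebra.nonneg_iff_eq_star_mul_self.mp hB.nonneg
  rw [star_eq_conjTranspose, star_eq_conjTranspose,
    trace_conjTranspose_mul_self_mul_conjTranspose_mul_self,
    trace_conjTranspose_mul_self_eq_zero_iff] at h
  calc Xᴴ * X * (Yᴴ * Y) = Xᴴ * (Y * Xᴴ)ᴴ * Y := by
        rw [conjTranspose_mul, conjTranspose_conjTranspose]; simp only [mul_assoc]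
    _ = 0 := by rw [h, conjTranspose_zero, mul_zero, zero_mul]

theorem posSemidef_of_isStarProjection {P : Matrix n n 𝕜} (hP : IsStarProjection P) :
    P.PosSemidef := by
  have h : Pᴴ * P = P := by
    rw [← star_eq_conjTranspose, hP.isSelfAdjoint.star_eq, hP.isIdempotentElem.eq]
  exact h ▸ posSemidef_conjTranspose_mul_self P

variable [DecidableEq n]

noncomputable def eigenprojection (A : Matrix n n 𝕜) (μ : ℝ) : Matrix n n 𝕜 :=
  cfc (fun x : ℝ => if x = μ then 1 else 0) A

theorem isStarProjection_eigenprojection (A : Matrix n n 𝕜) (μ : ℝ) :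
    IsStarProjection (eigenprojection A μ) := by
  have hc (f : ℝ → ℝ) : ContinuousOn f (spectrum ℝ A) := A.finite_real_spectrum.continuousOn f
  refine ⟨?_, cfc_predicate _ A⟩
  by_cases hA : IsSelfAdjoint A
  · rw [IsIdempotentElem, eigenprojection, ← cfc_mul _ _ A (hc _) (hc _)]
    congr! 2 with x
    split_ifs <;> simp
  · simp [IsIdempotentElem, eigenprojection, cfc_apply_of_not_predicate A hA]

theorem IsHermitian.mul_eigenprojection {A : Matrix n n 𝕜} (hA : A.IsHermitian) (μ : ℝ) :
    A * eigenprojection A μ = μ • eigenprojection A μ := by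
  have : IsSelfAdjoint A := hA.isSelfAdjoint
  have hc (f : ℝ → ℝ) : ContinuousOn f (spectrum ℝ A) := A.finite_real_spectrum.continuousOn f
  calc A * eigenprojection A μ = cfc (fun x : ℝ => x) A * eigenprojection A μ := by rw [cfc_id' ℝ A]
    _ = μ • eigenprojection A μ := by
      rw [eigenprojection, ← cfc_mul _ _ A (hc _) (hc _), ← cfc_smul μ _ A (hc _)]
      congr! 2 with x
      split_ifs with h <;> simp [h]

theorem IsHermitian.eigenprojection_mul_of_mul_eq_smul {A : Matrix n n 𝕜} (hA : A.IsHermitian)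
    {μ : ℝ} {M : Matrix n n 𝕜} (hM : A * M = μ • M) : eigenprojection A μ * M = M := by
  have : IsSelfAdjoint A := hA.isSelfAdjoint
  have hc (f : ℝ → ℝ) : ContinuousOn f (spectrum ℝ A) := A.finite_real_spectrum.continuousOn f
  -- `1 - eigenprojection A μ` factors through `A - μ`, which kills `M`
  have key : 1 - eigenprojection A μ =
      cfc (fun x : ℝ => if x = μ then 0 else (x - μ)⁻¹) A * (A - algebraMap ℝ _ μ) := by
    have hsub : A - algebraMap ℝ _ μ = cfc (fun x : ℝ => x - μ) A := by
      rw [cfc_sub _ _ A (hc _) (hc _), cfc_id' ℝ A, cfc_const μ A]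
    rw [hsub, eigenprojection, ← cfc_mul _ _ A (hc _) (hc _), ← cfc_const_one ℝ A,
      ← cfc_sub _ _ A (hc _) (hc _)]
    congr! 2 with x
    split_ifs with h
    · simp
    · rw [inv_mul_cancel₀ (sub_ne_zero.mpr h), sub_zero]
  have : (1 - eigenprojection A μ) * M = 0 := by
    rw [key, mul_assoc, sub_mul, hM, Algebra.algebraMap_eq_smul_one, smul_one_mul, sub_self,
      mul_zero]
  rwa [sub_mul, one_mul, sub_eq_zero, eq_comm] at this

structure IsPOVM {ι : Type*} [Fintype ι] (E : ι → Matrix n n 𝕜) : Prop where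
  posSemidef : ∀ k, (E k).PosSemidef
  sum_eq_one : ∑ k, E k = 1

namespace IsPOVM

variable {ι : Type*} [Fintype ι] {E : ι → Matrix n n 𝕜} (hE : IsPOVM E)
include hE

theorem mul_eq_zero_of_trace_mul_eq {M : Matrix n n 𝕜} (hM : M.PosSemidef) {k l : ι}
    (hk : (E k * M).trace = M.trace) (hlk : l ≠ k) : E l * M = 0 := by
  classical
  have hrest : ∑ j ∈ Finset.univ.erase k, (E j * M).trace = 0 := by
    rw [← trace_sum, ← Finset.sum_mul, Finset.sum_erase_eq_sub (Finset.mem_univ k),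
      hE.sum_eq_one, sub_mul, one_mul, trace_sub, hk, sub_self]
  have hl := (Finset.sum_eq_zero_iff_of_nonneg fun j _ => (hE.posSemidef j).trace_mul_nonneg hM).mp
    hrest l (by simp [hlk])
  exact (hE.posSemidef l).mul_eq_zero_of_trace_mul_eq_zero hM hl

theorem mul_eq_self_of_trace_mul_eq {M : Matrix n n 𝕜} (hM : M.PosSemidef) {k : ι}
    (hk : (E k * M).trace = M.trace) : E k * M = M :=
  calc E k * M = ∑ j, E j * M := (Finset.sum_eq_single k
        (fun j _ hjk => hE.mul_eq_zero_of_trace_mul_eq hM hk hjk) (by simp)).symm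
    _ = M := by rw [← Finset.sum_mul, hE.sum_eq_one, one_mul]

-- The eigenvalue-`1` eigenprojections of the effects are mutually orthogonal, because whatever
-- `E k` fixes is annihilated by every other effect.
theorem exists_isProjectiveMeasurement :
    ∃ Q : ι → Matrix n n 𝕜, IsProjectiveMeasurement Q ∧
      ∀ k M, E k * M = M → Q k * M = M := by
  rcases isEmpty_or_nonempty ι with hι | hι
  · exact ⟨E, ⟨isEmptyElim, isEmptyElim, hE.sum_eq_one⟩, isEmptyElim⟩
  set F := fun k => eigenprojection (E k) 1
  have hF (k) : IsStarProjection (F k) := isStarProjection_eigenprojection _ _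
  have hEF (k) : E k * F k = F k := by
    simpa using (hE.posSemidef k).isHermitian.mul_eigenprojection 1
  have hFE (k) : F k * E k = F k := by
    simpa [(hF k).isSelfAdjoint.star_eq, (hE.posSemidef k).isHermitian.isSelfAdjoint.star_eq]
      using congr(star $(hEF k))
  have horth (k l) (hkl : k ≠ l) : F k * F l = 0 := by
    rw [← hFE k, mul_assoc, hE.mul_eq_zero_of_trace_mul_eq (posSemidef_of_isStarProjection (hF l))
      (by rw [hEF l]) hkl, mul_zero]
  obtain ⟨Q, hQ, hQF⟩ := exists_isProjectiveMeasurement_mul_eq_of_orthogonal hF horth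
  refine ⟨Q, hQ, fun k M hM => ?_⟩
  have hFM : F k * M = M :=
    (hE.posSemidef k).isHermitian.eigenprojection_mul_of_mul_eq_smul (by rwa [one_smul])
  rw [← hFM, ← mul_assoc, hQF k]

end IsPOVM

end

section Kronecker

variable {R l m p q : Type*} [CommSemiring R]

theorem sum_kronecker {ι : Type*} (s : Finset ι) (A : ι → Matrix l m R) (B : Matrix p q R) :
    (∑ i ∈ s, A i) ⊗ₖ B = ∑ i ∈ s, A i ⊗ₖ B := by
  ext
  simp [kroneckerMap_apply, sum_apply, Finset.sum_mul]

theorem kronecker_mul_kronecker_mul_conjTranspose [StarRing R] [Fintype m] [Fintype q]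
    (A : Matrix l m R) (B : Matrix p q R) (C : Matrix m m R) (D : Matrix q q R) :
    A ⊗ₖ B * C ⊗ₖ D * (A ⊗ₖ B)ᴴ = (A * C * Aᴴ) ⊗ₖ (B * D * Bᴴ) := by
  rw [conjTranspose_kronecker, mul_kronecker_mul, mul_kronecker_mul]

end Kronecker

section Unitary

variable {R n : Type*} [CommRing R] [StarRing R] [Fintype n] [DecidableEq n]
  {V : Matrix n n R} (hV : V ∈ unitaryGroup n R)
include hV

theorem mul_conjTranspose_self_of_mem_unitaryGroup : V * Vᴴ = 1 :=
  Unitary.mul_star_self_of_mem hV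

theorem conjTranspose_mul_self_of_mem_unitaryGroup : Vᴴ * V = 1 :=
  Unitary.star_mul_self_of_mem hV

theorem trace_unitary_conj (X : Matrix n n R) : (V * X * Vᴴ).trace = X.trace := by
  rw [trace_mul_cycle, conjTranspose_mul_self_of_mem_unitaryGroup hV, Matrix.one_mul]

theorem unitary_conj_mul_unitary_conj (X Y : Matrix n n R) :
    V * X * Vᴴ * (V * Y * Vᴴ) = V * (X * Y) * Vᴴ := by
  simp only [Matrix.mul_assoc]
  rw [← Matrix.mul_assoc Vᴴ, conjTranspose_mul_self_of_mem_unitaryGroup hV, Matrix.one_mul]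

end Unitary

section Representation

variable {G R s a : Type*} [Group G] [CommRing R] [StarRing R] [Fintype s] [DecidableEq s]
  [Fintype a] [DecidableEq a]

def unitaryKronecker (Us : G →* unitaryGroup s R) (Ua : G →* unitaryGroup a R) :
    G →* unitaryGroup (s × a) R where
  toFun g :=
    ⟨(Us g : Matrix s s R) ⊗ₖ (Ua g : Matrix a a R), kronecker_mem_unitary (Us g).2 (Ua g).2⟩
  map_one' := Subtype.ext <| by simp
  map_mul' g h := Subtype.ext <| by simp [mul_kronecker_mul]

@[simp]
theorem coe_unitaryKronecker (Us : G →* unitaryGroup s R) (Ua : G →* unitaryGroup a R) (g : G) :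
    (unitaryKronecker Us Ua g : Matrix (s × a) (s × a) R) =
      (Us g : Matrix s s R) ⊗ₖ (Ua g : Matrix a a R) :=
  rfl

end Representation

section Twirl

variable {G 𝕜 n : Type*} [Group G] [Fintype G] [RCLike 𝕜] [Fintype n] [DecidableEq n]

noncomputable def twirl (U : G →* unitaryGroup n 𝕜) (X : Matrix n n 𝕜) : Matrix n n 𝕜 :=
  (Fintype.card G : 𝕜)⁻¹ • ∑ g, (U g : Matrix n n 𝕜)ᴴ * X * U g

variable (U : G →* unitaryGroup n 𝕜)

theorem conjTranspose_mul_twirl_mul (X : Matrix n n 𝕜) (h : G) :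
    (U h : Matrix n n 𝕜)ᴴ * twirl U X * U h = twirl U X := by
  simp only [twirl, Matrix.mul_smul, Matrix.smul_mul, Finset.mul_sum, Finset.sum_mul]
  congr 1
  exact Fintype.sum_equiv (Equiv.mulRight h) _ _ fun g => by
    simp [conjTranspose_mul, Matrix.mul_assoc]

theorem twirl_mul_comm (X : Matrix n n 𝕜) (h : G) : twirl U X * U h = U h * twirl U X := by
  conv_rhs => rw [← conjTranspose_mul_twirl_mul U X h]
  rw [← Matrix.mul_assoc, ← Matrix.mul_assoc, mul_conjTranspose_self_of_mem_unitaryGroup (U h).2,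
    Matrix.one_mul]

theorem PosSemidef.twirl {X : Matrix n n 𝕜} (hX : X.PosSemidef) : (twirl U X).PosSemidef :=
  (posSemidef_sum _ fun g _ => hX.conjTranspose_mul_mul_same _).smul (by positivity)

theorem twirl_sum {ι : Type*} (t : Finset ι) (X : ι → Matrix n n 𝕜) :
    twirl U (∑ k ∈ t, X k) = ∑ k ∈ t, twirl U (X k) := by
  simp only [twirl, Finset.mul_sum, Finset.sum_mul, ← Finset.smul_sum]
  rw [Finset.sum_comm]

theorem twirl_one : twirl U 1 = 1 := by
  have hU (g : G) : (U g : Matrix n n 𝕜)ᴴ * U g = 1 :=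
    conjTranspose_mul_self_of_mem_unitaryGroup (U g).2
  simp [twirl, hU, ← Nat.cast_smul_eq_nsmul 𝕜, smul_smul]

theorem trace_twirl_mul_of_forall {X Y : Matrix n n 𝕜} {c : 𝕜}
    (h : ∀ g, (X * (U g * Y * (U g : Matrix n n 𝕜)ᴴ)).trace = c) : (twirl U X * Y).trace = c := by
  have hcard : (Fintype.card G : 𝕜) ≠ 0 := Nat.cast_ne_zero.mpr Fintype.card_ne_zero
  have hterm (g) : ((U g : Matrix n n 𝕜)ᴴ * X * U g * Y).trace = c := by
    rw [← h g, Matrix.mul_assoc, Matrix.mul_assoc, trace_mul_comm]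
    simp only [Matrix.mul_assoc]
  simp only [twirl, Matrix.smul_mul, trace_smul, Finset.sum_mul, trace_sum, hterm,
    Finset.sum_const, Finset.card_univ, nsmul_eq_mul, smul_eq_mul, ← mul_assoc,
    inv_mul_cancel₀ hcard, one_mul]

end Twirl

section Simulation

variable {𝕜 s a : Type*} [RCLike 𝕜] [Fintype s] [DecidableEq s] [Fintype a] [DecidableEq a]

theorem IsPOVM.mul_kronecker_eq_self {κ : Type*} [Fintype κ]
    {E : κ → Matrix (s × a) (s × a) 𝕜} (hE : IsPOVM E) {ρa : Matrix a a 𝕜}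
    (hρa : ρa.PosSemidef) (hρatr : ρa.trace = 1) {P : Matrix s s 𝕜} (hP : P.PosSemidef)
    (hPP : P * P = P) {k : κ}
    (hsim : ∀ ρs : Matrix s s 𝕜, ρs.PosSemidef → ρs.trace = 1 →
      (E k * (ρs ⊗ₖ ρa)).trace = (P * ρs).trace) :
    E k * (P ⊗ₖ ρa) = P ⊗ₖ ρa := by
  rcases eq_or_ne P 0 with rfl | hP0
  · simp
  have htr : P.trace ≠ 0 := fun h => hP0 (hP.trace_eq_zero_iff.mp h)
  have hnorm := hsim (P.trace⁻¹ • P) (hP.smul (inv_nonneg.mpr hP.trace_nonneg))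
    (by rw [trace_smul, smul_eq_mul, inv_mul_cancel₀ htr])
  rw [smul_kronecker, Matrix.mul_smul, trace_smul, Matrix.mul_smul, trace_smul, smul_eq_mul,
    smul_eq_mul, mul_right_inj' (inv_ne_zero htr), hPP] at hnorm
  exact hE.mul_eq_self_of_trace_mul_eq (hP.kronecker hρa)
    (by rw [hnorm, trace_kronecker, hρatr, mul_one])

theorem trace_mul_kronecker_conj_of_mul_eq {V : Matrix s s 𝕜} {W : Matrix a a 𝕜}
    (hV : V ∈ unitaryGroup s 𝕜) (hW : W ∈ unitaryGroup a 𝕜) {Q : Matrix (s × a) (s × a) 𝕜}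
    {P : Matrix s s 𝕜} {ρ : Matrix a a 𝕜} (hρ : ρ.trace = 1)
    (hQ : Q * (V ⊗ₖ W * (1 ⊗ₖ ρ)) = V ⊗ₖ W * (P ⊗ₖ ρ)) (ρs : Matrix s s 𝕜) :
    (Q * (ρs ⊗ₖ (W * ρ * Wᴴ))).trace = (V * P * Vᴴ * ρs).trace := by
  have hconj (X : Matrix s s 𝕜) :
      V ⊗ₖ W * (X ⊗ₖ ρ) * (V ⊗ₖ W)ᴴ * (ρs ⊗ₖ 1) = (V * X * Vᴴ * ρs) ⊗ₖ (W * ρ * Wᴴ) := by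
    rw [kronecker_mul_kronecker_mul_conjTranspose, ← mul_kronecker_mul, Matrix.mul_one]
  have hstate : ρs ⊗ₖ (W * ρ * Wᴴ) = V ⊗ₖ W * (1 ⊗ₖ ρ) * (V ⊗ₖ W)ᴴ * (ρs ⊗ₖ 1) := by
    rw [hconj, Matrix.mul_one, mul_conjTranspose_self_of_mem_unitaryGroup hV, Matrix.one_mul]
  rw [hstate, ← Matrix.mul_assoc, ← Matrix.mul_assoc, hQ, hconj, trace_kronecker,
    trace_unitary_conj hW, hρ, mul_one]

end Simulation

end Matrix

theorem symmetric_simulation_iff_covariant_programming_general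
    {G : Type*} [Group G] [Fintype G]
    {s a κ : Type*} [Fintype s] [DecidableEq s] [Fintype a] [DecidableEq a] [Fintype κ]
    (Us : G →* Matrix.unitaryGroup s ℂ) (Ua : G →* Matrix.unitaryGroup a ℂ)
    (ρa : Matrix a a ℂ) (hρa : ρa.PosSemidef) (hρatr : ρa.trace = 1)
    (P : κ → Matrix s s ℂ)
    (hherm : ∀ k, (P k).IsHermitian) (hidem : ∀ k, P k * P k = P k)
    (hsum : ∑ k, P k = 1) :
    -- (i) a symmetric POVM simulating {P k} from the resource ρa
    (∃ E : κ → Matrix (s × a) (s × a) ℂ,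
      (∀ k, (E k).PosSemidef) ∧ (∑ k, E k = 1) ∧
      (∀ k (g : G), E k * ((Us g : Matrix s s ℂ) ⊗ₖ (Ua g : Matrix a a ℂ)) =
        ((Us g : Matrix s s ℂ) ⊗ₖ (Ua g : Matrix a a ℂ)) * E k) ∧
      (∀ k, ∀ ρs : Matrix s s ℂ, ρs.PosSemidef → ρs.trace = 1 →
        (E k * (ρs ⊗ₖ ρa)).trace = (P k * ρs).trace))
    ↔
    -- (ii) a projective measurement covariantly programming the whole orbit
    (∃ Q : κ → Matrix (s × a) (s × a) ℂ,
      (∀ k, (Q k).IsHermitian) ∧ (∀ k, Q k * Q k = Q k) ∧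
      (∀ k l, k ≠ l → Q k * Q l = 0) ∧ (∑ k, Q k = 1) ∧
      (∀ (g : G) (k : κ), ∀ ρs : Matrix s s ℂ, ρs.PosSemidef → ρs.trace = 1 →
        (Q k * (ρs ⊗ₖ
          ((Ua g : Matrix a a ℂ) * ρa * (Ua g : Matrix a a ℂ)ᴴ))).trace =
        ((Us g : Matrix s s ℂ) * P k * (Us g : Matrix s s ℂ)ᴴ * ρs).trace)) := by
  set u := unitaryKronecker Us Ua
  constructor
  · rintro ⟨E, hEpos, hEsum, hEcomm, hEsim⟩
    have hE : IsPOVM E := ⟨hEpos, hEsum⟩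
    obtain ⟨Q, hQ, hQfix⟩ := hE.exists_isProjectiveMeasurement
    refine ⟨Q, fun k => (hQ.isStarProjection k).isSelfAdjoint,
      fun k => (hQ.isStarProjection k).isIdempotentElem, hQ.mul_eq_zero, hQ.sum_eq_one,
      fun g k ρs _ _ => trace_mul_kronecker_conj_of_mul_eq (Us g).2 (Ua g).2 hρatr ?_ ρs⟩
    have hfix (l) : Q l * (u g * (P l ⊗ₖ ρa)) = u g * (P l ⊗ₖ ρa) := hQfix l _ <| by
      rw [← Matrix.mul_assoc, coe_unitaryKronecker, hEcomm, Matrix.mul_assoc,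
        hE.mul_kronecker_eq_self hρa hρatr
          (posSemidef_of_isStarProjection ⟨hidem l, (hherm l).isSelfAdjoint⟩) (hidem l) (hEsim l)]
    rw [← hsum, sum_kronecker, Finset.mul_sum]
    exact hQ.mul_sum_eq_of_mul_eq_self hfix k
  · rintro ⟨Q, hQh, hQi, -, hQs, hQtr⟩
    refine ⟨fun k => twirl u (Q k),
      fun k => (posSemidef_of_isStarProjection ⟨hQi k, (hQh k).isSelfAdjoint⟩).twirl u,
      by rw [← twirl_sum, hQs, twirl_one], fun k g => twirl_mul_comm u (Q k) g,
      fun k ρs hρs hρstr => trace_twirl_mul_of_forall u fun g => ?_⟩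
    rw [coe_unitaryKronecker, kronecker_mul_kronecker_mul_conjTranspose,
      hQtr g k _ (hρs.mul_mul_conjTranspose_same _) (by rw [trace_unitary_conj (Us g).2, hρstr]),
      unitary_conj_mul_unitary_conj (Us g).2, trace_unitary_conj (Us g).2]

/-- Duality lemma: symmetric simulation of a projective measurement from a
resource state is equivalent to covariant programming of its group orbit.
In direction (i) we allow a POVM (as averaging a projective measurement over
the group yields in general only a POVM). -/
theorem symmetric_simulation_iff_covariant_programming
    {G : Type*} [Group G] [Fintype G]
    {s a κ : Type*} [Fintype s] [DecidableEq s] [Fintype a] [DecidableEq a] [Fintype κ]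
    (Us : G →* Matrix.unitaryGroup s ℂ) (Ua : G →* Matrix.unitaryGroup a ℂ)
    (ρa : Matrix a a ℂ) (hρa : ρa.PosSemidef) (hρatr : ρa.trace = 1)
    (P : κ → Matrix s s ℂ)
    (hherm : ∀ k, (P k).IsHermitian) (hidem : ∀ k, P k * P k = P k)
    (horth : ∀ k l, k ≠ l → P k * P l = 0) (hsum : ∑ k, P k = 1) :
    -- (i) a symmetric POVM simulating {P k} from the resource ρa
    (∃ E : κ → Matrix (s × a) (s × a) ℂ,
      (∀ k, (E k).PosSemidef) ∧ (∑ k, E k = 1) ∧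
      (∀ k (g : G), E k * ((Us g : Matrix s s ℂ) ⊗ₖ (Ua g : Matrix a a ℂ)) =
        ((Us g : Matrix s s ℂ) ⊗ₖ (Ua g : Matrix a a ℂ)) * E k) ∧
      (∀ k, ∀ ρs : Matrix s s ℂ, ρs.PosSemidef → ρs.trace = 1 →
        (E k * (ρs ⊗ₖ ρa)).trace = (P k * ρs).trace))
    ↔
    -- (ii) a projective measurement covariantly programming the whole orbit
    (∃ Q : κ → Matrix (s × a) (s × a) ℂ,
      (∀ k, (Q k).IsHermitian) ∧ (∀ k, Q k * Q k = Q k) ∧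
      (∀ k l, k ≠ l → Q k * Q l = 0) ∧ (∑ k, Q k = 1) ∧
      (∀ (g : G) (k : κ), ∀ ρs : Matrix s s ℂ, ρs.PosSemidef → ρs.trace = 1 →
        (Q k * (ρs ⊗ₖ
          ((Ua g : Matrix a a ℂ) * ρa * (Ua g : Matrix a a ℂ)ᴴ))).trace =
        ((Us g : Matrix s s ℂ) * P k * (Us g : Matrix s s ℂ)ᴴ * ρs).trace)) :=
  symmetric_simulation_iff_covariant_programming_general Us Ua ρa hρa hρatr P hherm hidem hsum
end

section
/- Let G be a finite group with unitary representations U_a on H_a and U_s on H_s. Suppose ρ_a on H_a is perfectly asymmetric with trivial stabilizer (the |G| states U_a(g)ρ_a U_a(g)† are pairwise distinct and mutually orthogonal). Then for every projective measurement {Π_k} on H_s there exists a POVM {E_k} on H_s⊗H_a with every E_k commuting with U_s(g)⊗U_a(g) for all g, such that Tr(E_k(ρ_s⊗ρ_a)) = Tr(Π_kρ_s) for all states ρ_s and all k. (A perfect reference frame lifts the restriction to symmetric measurements.) -/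
open Matrix
open scoped ComplexOrder Kronecker

/-!
Let `Q` be the support projection of `ρa`. Since the frame states `Ua g ρa (Ua g)⋆` are mutually
orthogonal, so are their support projections `Ua g Q (Ua g)⋆`; together with a uniform share of the
complement of their sum they form a covariant POVM `F` on the ancilla with `F g ρa = 0` for
`g ≠ 1` and `F 1 ρa = ρa`. Reading the frame and measuring the correspondingly rotated effect,
`E k = ∑ g, Us g (P k) (Us g)⋆ ⊗ F g`, is symmetric because a joint rotation by `h` only relabels
`g ↦ h * g`, and on `ρs ⊗ ρa` only the term `g = 1` survives.
-/

theorem commute_sum_of_mul_eq {R G : Type*} [NonUnitalNonAssocSemiring R] [Group G] [Fintype G]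
    (u : R) (h : G) {f : G → R} (hf : ∀ g, u * f g = f (h * g) * u) : Commute u (∑ g, f g) := by
  simp only [Commute, SemiconjBy, Finset.mul_sum, Finset.sum_mul, hf]
  exact Equiv.sum_comp (Equiv.mulLeft h) (fun g => f g * u)

theorem IsStarProjection.sum {R ι : Type*} [NonUnitalNonAssocSemiring R] [StarRing R]
    (s : Finset ι) {p : ι → R} (hp : ∀ i ∈ s, IsStarProjection (p i))
    (horth : (s : Set ι).Pairwise fun i j => p i * p j = 0) :
    IsStarProjection (∑ i ∈ s, p i) := by
  classical
  induction s using Finset.induction_on with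
  | empty => simp
  | insert i s hi ih =>
    rw [Finset.forall_mem_insert] at hp
    rw [Finset.coe_insert, Set.pairwise_insert] at horth
    rw [Finset.sum_insert hi]
    refine hp.1.add (ih hp.2 horth.1) ?_
    rw [Finset.mul_sum]
    exact Finset.sum_eq_zero fun j hj => (horth.2 j hj (ne_of_mem_of_not_mem hj hi).symm).1

theorem Matrix.sum_kronecker_s12 {ι l m n p α : Type*} [CommSemiring α] (t : Finset ι)
    (A : ι → Matrix l m α) (B : Matrix n p α) : (∑ i ∈ t, A i) ⊗ₖ B = ∑ i ∈ t, A i ⊗ₖ B :=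
  LinearMap.map_sum₂ (kroneckerBilinear (R := α)) t A B

theorem Matrix.kronecker_sum {ι l m n p α : Type*} [CommSemiring α] (t : Finset ι)
    (A : Matrix l m α) (B : ι → Matrix n p α) : A ⊗ₖ (∑ i ∈ t, B i) = ∑ i ∈ t, A ⊗ₖ B i :=
  map_sum (kroneckerBilinear (R := α) A) B t

section Unitary

variable {R : Type*} [Monoid R] [StarMul R]

theorem Unitary.coe_star_mul_self_mul (u : unitary R) (x : R) : star (u : R) * (u * x) = x := by
  rw [← mul_assoc, Unitary.coe_star_mul_self, one_mul]

variable {G : Type*} [Group G]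

def MonoidHom.conjOrbit (U : G →* unitary R) (x : R) (g : G) : R :=
  U g * x * star (U g : R)

theorem MonoidHom.conjOrbit_one (U : G →* unitary R) (x : R) : U.conjOrbit x 1 = x := by
  simp [MonoidHom.conjOrbit]

theorem MonoidHom.coe_mul_conjOrbit (U : G →* unitary R) (x : R) (h g : G) :
    U h * U.conjOrbit x g = U.conjOrbit x (h * g) * U h := by
  simp [MonoidHom.conjOrbit, mul_assoc]

end Unitary

/-- For self-adjoint `a` these conditions characterize `p` as the projection onto the range
of `a`. -/
structure IsSupportProjection {R : Type*} [Ring R] [StarRing R] (p a : R) : Prop where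
  isStarProjection : IsStarProjection p
  mul_self_eq : p * a = a
  mul_eq_zero_of_mul_eq_zero : ∀ x, a * x = 0 → p * x = 0

namespace IsSupportProjection

variable {R : Type*} [Ring R] [StarRing R] {p q a b : R}

theorem conj (h : IsSupportProjection p a) (u : unitary R) :
    IsSupportProjection ((u : R) * p * star (u : R)) ((u : R) * a * star (u : R)) where
  isStarProjection := h.isStarProjection.map (Unitary.conjStarAlgAut ℤ R u)
  mul_self_eq := by
    simp only [mul_assoc, Unitary.coe_star_mul_self_mul, ← mul_assoc p, h.mul_self_eq]
  mul_eq_zero_of_mul_eq_zero x hx := by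
    have hax : a * (star (u : R) * x) = 0 := by
      simpa only [mul_assoc, Unitary.coe_star_mul_self_mul, mul_zero] using
        congr(star (u : R) * $hx)
    simp only [mul_assoc, h.mul_eq_zero_of_mul_eq_zero _ hax, mul_zero]

theorem mul_eq_zero (hp : IsSupportProjection p a) (hq : IsSupportProjection q b)
    (ha : IsSelfAdjoint a) (hb : IsSelfAdjoint b) (hab : a * b = 0) : p * q = 0 := by
  have hba : b * a = 0 := by simpa [ha.star_eq, hb.star_eq] using congr(star $hab)
  have hqa : q * a = 0 := hq.mul_eq_zero_of_mul_eq_zero a hba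
  have haq : a * q = 0 := by
    simpa [ha.star_eq, hq.isStarProjection.isSelfAdjoint.star_eq] using congr(star $hqa)
  exact hp.mul_eq_zero_of_mul_eq_zero q haq

variable {G : Type*} [Group G] {U : G →* unitary R}

theorem conjOrbit_mul_conjOrbit_eq_zero (hp : IsSupportProjection p a) (ha : IsSelfAdjoint a)
    (horth : Pairwise fun g h => U.conjOrbit a g * U.conjOrbit a h = 0) {g h : G} (hgh : g ≠ h) :
    U.conjOrbit p g * U.conjOrbit p h = 0 :=
  (hp.conj (U g)).mul_eq_zero (hp.conj (U h)) (ha.conjugate _) (ha.conjugate _) (horth hgh)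

theorem conjOrbit_mul_eq_zero (hp : IsSupportProjection p a) (ha : IsSelfAdjoint a)
    (horth : Pairwise fun g h => U.conjOrbit a g * U.conjOrbit a h = 0) {g : G} (hg : g ≠ 1) :
    U.conjOrbit p g * a = 0 := by
  have h1 := hp.conjOrbit_mul_conjOrbit_eq_zero ha horth hg
  rw [U.conjOrbit_one] at h1
  rw [← hp.mul_self_eq, ← mul_assoc, h1, zero_mul]

theorem sum_conjOrbit_mul_self [Fintype G] (hp : IsSupportProjection p a) (ha : IsSelfAdjoint a)
    (horth : Pairwise fun g h => U.conjOrbit a g * U.conjOrbit a h = 0) :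
    (∑ g, U.conjOrbit p g) * a = a := by
  rw [Finset.sum_mul, Fintype.sum_eq_single 1 fun g hg => hp.conjOrbit_mul_eq_zero ha horth hg,
    U.conjOrbit_one, hp.mul_self_eq]

end IsSupportProjection

theorem IsStarProjection.posSemidef {𝕜 n : Type*} [RCLike 𝕜] [Fintype n] {p : Matrix n n 𝕜}
    (hp : IsStarProjection p) : p.PosSemidef := by
  have h := posSemidef_conjTranspose_mul_self p
  rwa [IsHermitian.eq hp.isSelfAdjoint, hp.isIdempotentElem.eq] at h

/-- The support projection is `cfc (x ↦ x⁻¹ * x) A = cfc (·⁻¹) A * A` (with `0⁻¹ = 0`);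
the spectrum is finite, so every function is continuous on it. -/
theorem Matrix.IsHermitian.exists_isSupportProjection {𝕜 n : Type*} [RCLike 𝕜] [Fintype n]
    [DecidableEq n] {A : Matrix n n 𝕜} (hA : A.IsHermitian) : ∃ p, IsSupportProjection p A := by
  have hA : IsSelfAdjoint A := hA
  have hcont (f : ℝ → ℝ) : ContinuousOn f (spectrum ℝ A) := finite_real_spectrum.continuousOn f
  have hp : cfc (fun x : ℝ => x⁻¹ * x) A = cfc (fun x : ℝ => x⁻¹) A * A := by
    rw [cfc_mul (fun x : ℝ => x⁻¹) (fun x => x) A (hcont _) (hcont _), cfc_id' ℝ A]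
  refine ⟨cfc (fun x : ℝ => x⁻¹ * x) A, ⟨⟨?_, cfc_predicate _ A⟩, ?_, fun x hx => ?_⟩⟩
  · rw [IsIdempotentElem, ← cfc_mul _ _ A (hcont _) (hcont _)]
    exact cfc_congr fun x _ => by by_cases hx : x = 0 <;> simp [hx]
  · calc _ = cfc (fun x : ℝ => x⁻¹ * x * x) A := by
          rw [cfc_mul (fun x : ℝ => x⁻¹ * x) (fun x => x) A (hcont _) (hcont _), cfc_id' ℝ A]
      _ = cfc (fun x : ℝ => x) A := cfc_congr fun x _ => by by_cases hx : x = 0 <;> simp [hx]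
      _ = A := cfc_id' ℝ A
  · rw [hp, mul_assoc, hx, mul_zero]

section FramePOVM

variable {G 𝕜 a : Type*} [Group G] [Fintype G] [RCLike 𝕜] [Fintype a] [DecidableEq a]

noncomputable def framePOVM (U : G →* unitaryGroup a 𝕜) (Q : Matrix a a 𝕜) (g : G) :
    Matrix a a 𝕜 :=
  U.conjOrbit Q g + (Fintype.card G : ℝ)⁻¹ • (1 - ∑ h, U.conjOrbit Q h)

variable (U : G →* unitaryGroup a 𝕜)

theorem sum_framePOVM (Q : Matrix a a 𝕜) : ∑ g, framePOVM U Q g = 1 := by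
  have hcard : (Fintype.card G : ℝ) ≠ 0 := Nat.cast_ne_zero.mpr Fintype.card_ne_zero
  simp only [framePOVM, Finset.sum_add_distrib, Finset.sum_const, Finset.card_univ,
    ← Nat.cast_smul_eq_nsmul ℝ, smul_smul, mul_inv_cancel₀ hcard, one_smul, add_sub_cancel]

theorem coe_mul_framePOVM (Q : Matrix a a 𝕜) (h g : G) :
    (U h : Matrix a a 𝕜) * framePOVM U Q g = framePOVM U Q (h * g) * U h := by
  have hsum := commute_sum_of_mul_eq (U h : Matrix a a 𝕜) h fun g => U.coe_mul_conjOrbit Q h g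
  simp only [framePOVM, mul_add, add_mul, U.coe_mul_conjOrbit,
    (((Commute.one_right _).sub_right hsum).smul_right _).eq]

variable {U} {Q ρ : Matrix a a 𝕜}

theorem posSemidef_framePOVM (hQ : IsSupportProjection Q ρ) (hρ : ρ.IsHermitian)
    (horth : Pairwise fun g h => U.conjOrbit ρ g * U.conjOrbit ρ h = 0) (g : G) :
    (framePOVM U Q g).PosSemidef := by
  have hsum : IsStarProjection (∑ h, U.conjOrbit Q h) :=
    IsStarProjection.sum _ (fun h _ => (hQ.conj (U h)).isStarProjection)
      fun _ _ _ _ hgh => hQ.conjOrbit_mul_conjOrbit_eq_zero hρ horth hgh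
  exact (hQ.conj (U g)).isStarProjection.posSemidef.add
    (hsum.one_sub.posSemidef.smul (inv_nonneg.mpr (Nat.cast_nonneg _)))

theorem framePOVM_mul_eq (hQ : IsSupportProjection Q ρ) (hρ : ρ.IsHermitian)
    (horth : Pairwise fun g h => U.conjOrbit ρ g * U.conjOrbit ρ h = 0) (g : G) :
    framePOVM U Q g * ρ = U.conjOrbit Q g * ρ := by
  rw [framePOVM, add_mul, smul_mul_assoc, sub_mul, one_mul,
    hQ.sum_conjOrbit_mul_self hρ horth, sub_self, smul_zero, add_zero]

theorem framePOVM_one_mul (hQ : IsSupportProjection Q ρ) (hρ : ρ.IsHermitian)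
    (horth : Pairwise fun g h => U.conjOrbit ρ g * U.conjOrbit ρ h = 0) :
    framePOVM U Q 1 * ρ = ρ := by
  rw [framePOVM_mul_eq hQ hρ horth, U.conjOrbit_one, hQ.mul_self_eq]

theorem framePOVM_mul_eq_zero (hQ : IsSupportProjection Q ρ) (hρ : ρ.IsHermitian)
    (horth : Pairwise fun g h => U.conjOrbit ρ g * U.conjOrbit ρ h = 0) {g : G} (hg : g ≠ 1) :
    framePOVM U Q g * ρ = 0 := by
  rw [framePOVM_mul_eq hQ hρ horth, hQ.conjOrbit_mul_eq_zero hρ horth hg]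

end FramePOVM

section AlignedEffect

variable {G 𝕜 s a : Type*} [Group G] [Fintype G] [RCLike 𝕜] [Fintype s] [DecidableEq s]

noncomputable def alignedEffect (U : G →* unitaryGroup s 𝕜) (F : G → Matrix a a 𝕜)
    (P : Matrix s s 𝕜) : Matrix (s × a) (s × a) 𝕜 :=
  ∑ g, U.conjOrbit P g ⊗ₖ F g

variable (U : G →* unitaryGroup s 𝕜) {F : G → Matrix a a 𝕜}

theorem posSemidef_alignedEffect [Finite a] {P : Matrix s s 𝕜} (hP : P.PosSemidef)
    (hF : ∀ g, (F g).PosSemidef) : (alignedEffect U F P).PosSemidef :=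
  posSemidef_sum _ fun g _ => (hP.mul_mul_conjTranspose_same _).kronecker (hF g)

theorem sum_alignedEffect [DecidableEq a] {κ : Type*} [Fintype κ]
    {P : κ → Matrix s s 𝕜} (hP : ∑ k, P k = 1) (hF : ∑ g, F g = 1) :
    ∑ k, alignedEffect U F (P k) = 1 := by
  have hrot (g : G) : ∑ k, U.conjOrbit (P k) g = 1 := by
    simp only [MonoidHom.conjOrbit]
    rw [← Finset.sum_mul, ← Finset.mul_sum, hP, mul_one, Unitary.mul_star_self_of_mem (U g).2]
  simp only [alignedEffect]
  rw [Finset.sum_comm]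
  simp only [← sum_kronecker_s12, hrot, ← kronecker_sum, hF, one_kronecker_one]

theorem commute_alignedEffect [Fintype a] [DecidableEq a] (V : G →* unitaryGroup a 𝕜)
    (hF : ∀ h g, (V h : Matrix a a 𝕜) * F g = F (h * g) * V h) (P : Matrix s s 𝕜) (h : G) :
    Commute ((U h : Matrix s s 𝕜) ⊗ₖ (V h : Matrix a a 𝕜)) (alignedEffect U F P) :=
  commute_sum_of_mul_eq _ h fun g => by
    rw [← mul_kronecker_mul, U.coe_mul_conjOrbit, hF, mul_kronecker_mul]

theorem trace_alignedEffect_mul [Fintype a] {ρ : Matrix a a 𝕜} (hF1 : F 1 * ρ = ρ)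
    (hF : ∀ g ≠ 1, F g * ρ = 0) (P σ : Matrix s s 𝕜) :
    (alignedEffect U F P * (σ ⊗ₖ ρ)).trace = (P * σ).trace * ρ.trace := by
  rw [alignedEffect, Finset.sum_mul, trace_sum, Fintype.sum_eq_single 1 fun g hg => by
    rw [← mul_kronecker_mul, hF g hg, kronecker_zero, trace_zero], ← mul_kronecker_mul, hF1,
    trace_kronecker, U.conjOrbit_one]

end AlignedEffect

theorem perfect_reference_frame_lifts_restriction_general
    {G : Type*} [Group G] [Fintype G]
    {s a κ : Type*} [Fintype s] [DecidableEq s] [Fintype a] [DecidableEq a] [Fintype κ]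
    (Us : G →* Matrix.unitaryGroup s ℂ) (Ua : G →* Matrix.unitaryGroup a ℂ)
    (ρa : Matrix a a ℂ) (hρa : ρa.PosSemidef) (hρatr : ρa.trace = 1)
    (horth : ∀ g h : G, g ≠ h →
      ((Ua g : Matrix a a ℂ) * ρa * (Ua g : Matrix a a ℂ)ᴴ) *
        ((Ua h : Matrix a a ℂ) * ρa * (Ua h : Matrix a a ℂ)ᴴ) = 0)
    (P : κ → Matrix s s ℂ)
    (hherm : ∀ k, (P k).IsHermitian) (hidem : ∀ k, P k * P k = P k)
    (hsum : ∑ k, P k = 1) :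
    ∃ E : κ → Matrix (s × a) (s × a) ℂ,
      (∀ k, (E k).PosSemidef) ∧ (∑ k, E k = 1) ∧
      (∀ k (g : G), E k * ((Us g : Matrix s s ℂ) ⊗ₖ (Ua g : Matrix a a ℂ)) =
        ((Us g : Matrix s s ℂ) ⊗ₖ (Ua g : Matrix a a ℂ)) * E k) ∧
      (∀ k, ∀ ρs : Matrix s s ℂ, ρs.PosSemidef → ρs.trace = 1 →
        (E k * (ρs ⊗ₖ ρa)).trace = (P k * ρs).trace) := by
  obtain ⟨Q, hQ⟩ := hρa.isHermitian.exists_isSupportProjection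
  have horth' : Pairwise fun g h => Ua.conjOrbit ρa g * Ua.conjOrbit ρa h = 0 :=
    fun g h => horth g h
  refine ⟨fun k => alignedEffect Us (framePOVM Ua Q) (P k), fun k => ?_,
    sum_alignedEffect Us hsum (sum_framePOVM Ua Q), fun k g => ?_, fun k ρs _ _ => ?_⟩
  · exact posSemidef_alignedEffect Us (IsStarProjection.posSemidef ⟨hidem k, hherm k⟩)
      (posSemidef_framePOVM hQ hρa.isHermitian horth')
  · exact (commute_alignedEffect Us Ua (coe_mul_framePOVM Ua Q) (P k) g).eq.symm
  · rw [trace_alignedEffect_mul Us (framePOVM_one_mul hQ hρa.isHermitian horth')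
      (fun _ => framePOVM_mul_eq_zero hQ hρa.isHermitian horth'), hρatr, mul_one]

/-- A perfect reference frame lifts the restriction to symmetric measurements:
if `ρa` is perfectly asymmetric with trivial stabilizer, then every projective
measurement on the system can be simulated by a symmetric POVM on
system⊗ancilla using the resource `ρa`. -/
theorem perfect_reference_frame_lifts_restriction
    {G : Type*} [Group G] [Fintype G]
    {s a κ : Type*} [Fintype s] [DecidableEq s] [Fintype a] [DecidableEq a] [Fintype κ]
    (Us : G →* Matrix.unitaryGroup s ℂ) (Ua : G →* Matrix.unitaryGroup a ℂ)
    (ρa : Matrix a a ℂ) (hρa : ρa.PosSemidef) (hρatr : ρa.trace = 1)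
    (hdistinct : ∀ g h : G, g ≠ h →
      (Ua g : Matrix a a ℂ) * ρa * (Ua g : Matrix a a ℂ)ᴴ ≠
        (Ua h : Matrix a a ℂ) * ρa * (Ua h : Matrix a a ℂ)ᴴ)
    (horth : ∀ g h : G, g ≠ h →
      ((Ua g : Matrix a a ℂ) * ρa * (Ua g : Matrix a a ℂ)ᴴ) *
        ((Ua h : Matrix a a ℂ) * ρa * (Ua h : Matrix a a ℂ)ᴴ) = 0)
    (P : κ → Matrix s s ℂ)
    (hherm : ∀ k, (P k).IsHermitian) (hidem : ∀ k, P k * P k = P k)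
    (horthP : ∀ k l, k ≠ l → P k * P l = 0) (hsum : ∑ k, P k = 1) :
    ∃ E : κ → Matrix (s × a) (s × a) ℂ,
      (∀ k, (E k).PosSemidef) ∧ (∑ k, E k = 1) ∧
      (∀ k (g : G), E k * ((Us g : Matrix s s ℂ) ⊗ₖ (Ua g : Matrix a a ℂ)) =
        ((Us g : Matrix s s ℂ) ⊗ₖ (Ua g : Matrix a a ℂ)) * E k) ∧
      (∀ k, ∀ ρs : Matrix s s ℂ, ρs.PosSemidef → ρs.trace = 1 →
        (E k * (ρs ⊗ₖ ρa)).trace = (P k * ρs).trace) :=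
  perfect_reference_frame_lifts_restriction_general Us Ua ρa hρa hρatr horth P hherm hidem hsum
end
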